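/- (Theorem matter-3ψ.) For all Q₁, Q₂ ∈ A² (spinors in Σ) and Q₃ ∈ A² (a spinor in Σ*): Q₁·(Q₂,Q₃)ᴬ + Q₂·(Q₁,Q₃)ᴬ = ρ(Γ(Q₁,Q₂))Q₃, where (Q,Q₃)ᴬ := σ(q₀)*q₃,₀ + σ(q₁)*q₃,₁ ∈ A is the A-valued spinor pairing Q†·Q₃, where Q·x := (q₀*x, q₁*x) denotes the right action of x ∈ A on a column vector Q = (q₀,q₁), and where ρ(M)Q₃ := M̃·Q₃ is the Clifford action of the matrix M on Σ*. Equivalently (since the tilde operation on 2×2 matrices is an involution): Q₁·(Q₂,Q₃)ᴬ + Q₂·(Q₁,Q₃)ᴬ = (Q₁·Q₂† + Q₂·Q₁†)·Q₃. -/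

import Mathlib

/-!
Since the trace of `M̃` is `-tr M`, the tilde map is an involution, so `ρ(Γ(Q₁,Q₂))` is plain
multiplication by `Q₁·Q₂† + Q₂·Q₁†`. The identity is then distributivity together with
associativity `(Q₁·Q₂†)·Q₃ = Q₁·(Q₂†·Q₃)`.
-/

namespace Stmt6

variable {A : Type*} [AddCommGroup A] [Module ℂ A]

/-- Matrix–vector multiplication of a 2×2 matrix over `A` with a column vector in `A²`. -/
def act (mul : A → A → A) (M : Fin 2 → Fin 2 → A) (Q : Fin 2 → A) : Fin 2 → A :=
  fun k => mul (M k 0) (Q 0) + mul (M k 1) (Q 1)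

/-- The 2×2 matrix `Q·Q′† + Q′·Q†`. -/
def gammaRaw (mul : A → A → A) (σ : A → A) (Q Q' : Fin 2 → A) : Fin 2 → Fin 2 → A :=
  fun k l => mul (Q k) (σ (Q' l)) + mul (Q' k) (σ (Q l))

/-- `M̃ = M − tr(M)·1₂`. -/
def tilde (M : Fin 2 → Fin 2 → A) : Fin 2 → Fin 2 → A :=
  fun k l => M k l - if k = l then M 0 0 + M 1 1 else 0

/-- The Γ-pairing `Γ(Q,Q′) = tilde(Q·Q′† + Q′·Q†)`. -/
def Gamma (mul : A → A → A) (σ : A → A) (Q Q' : Fin 2 → A) : Fin 2 → Fin 2 → A :=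
  tilde (gammaRaw mul σ Q Q')

/-- The `A`-valued spinor pairing `(Q,Q₃)ᴬ = Q†·Q₃ = σ(q₀)q₃₀ + σ(q₁)q₃₁`. -/
def pairA (mul : A → A → A) (σ : A → A) (Q Q₃ : Fin 2 → A) : A :=
  mul (σ (Q 0)) (Q₃ 0) + mul (σ (Q 1)) (Q₃ 1)

end Stmt6

namespace Stmt6

variable {A : Type*} [AddCommGroup A]

theorem tilde_tilde (M : Fin 2 → Fin 2 → A) : tilde (tilde M) = M := by
  funext k l
  fin_cases k <;> fin_cases l <;> simp [tilde]

section MatrixAction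

variable {mul : A → A → A}

theorem act_add_matrix (hmul_addl : ∀ x y z : A, mul (x + y) z = mul x z + mul y z)
    (M N : Fin 2 → Fin 2 → A) (Q : Fin 2 → A) :
    act mul (M + N) Q = act mul M Q + act mul N Q := by
  funext k
  simp only [act, Pi.add_apply, hmul_addl]
  abel

theorem act_outer (hmul_addr : ∀ x y z : A, mul x (y + z) = mul x y + mul x z)
    (hassoc : ∀ x y z : A, mul (mul x y) z = mul x (mul y z))
    (σ : A → A) (P R Q : Fin 2 → A) (k : Fin 2) :
    act mul (fun k l => mul (P k) (σ (R l))) Q k = mul (P k) (pairA mul σ R Q) := by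
  simp only [act, pairA, hassoc, hmul_addr]

end MatrixAction

end Stmt6

namespace Stmt6

variable {A : Type*} [AddCommGroup A] [Module ℂ A]

theorem matter_three_psi_general
    (mul : A → A → A) (σ : A → A)
    -- `mul` is ℂ-bilinear
    (hmul_addl : ∀ x y z : A, mul (x + y) z = mul x z + mul y z)
    (hmul_addr : ∀ x y z : A, mul x (y + z) = mul x y + mul x z)
    -- `A` is associative
    (hassoc : ∀ x y z : A, mul (mul x y) z = mul x (mul y z))
    (Q₁ Q₂ Q₃ : Fin 2 → A) (k : Fin 2) :
    mul (Q₁ k) (pairA mul σ Q₂ Q₃) + mul (Q₂ k) (pairA mul σ Q₁ Q₃)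
      = act mul (tilde (Gamma mul σ Q₁ Q₂)) Q₃ k := by
  have hΓ : gammaRaw mul σ Q₁ Q₂
      = (fun k l => mul (Q₁ k) (σ (Q₂ l))) + fun k l => mul (Q₂ k) (σ (Q₁ l)) := rfl
  rw [Gamma, tilde_tilde, hΓ, act_add_matrix hmul_addl, Pi.add_apply,
    act_outer hmul_addr hassoc, act_outer hmul_addr hassoc]

theorem matter_three_psi
    (mul : A → A → A) (one : A) (σ : A → A) (Re Nm : A → ℂ)
    -- `mul` is ℂ-bilinear
    (hmul_addl : ∀ x y z : A, mul (x + y) z = mul x z + mul y z)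
    (hmul_addr : ∀ x y z : A, mul x (y + z) = mul x y + mul x z)
    (hmul_smull : ∀ (c : ℂ) (x y : A), mul (c • x) y = c • mul x y)
    (hmul_smulr : ∀ (c : ℂ) (x y : A), mul x (c • y) = c • mul x y)
    -- `one` is a unit
    (hone_mul : ∀ x : A, mul one x = x)
    (hmul_one : ∀ x : A, mul x one = x)
    -- `A` is associative
    (hassoc : ∀ x y z : A, mul (mul x y) z = mul x (mul y z))
    -- `σ` is a ℂ-linear anti-involution
    (hσ_add : ∀ x y : A, σ (x + y) = σ x + σ y)
    (hσ_smul : ∀ (c : ℂ) (x : A), σ (c • x) = c • σ x)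
    (hσ_mul : ∀ x y : A, σ (mul x y) = mul (σ y) (σ x))
    (hσ_invol : ∀ x : A, σ (σ x) = x)
    (hσ_one : σ one = one)
    -- real part and norm scalars
    (hRe : ∀ x : A, x + σ x = (2 * Re x) • one)
    (hNm : ∀ x : A, mul x (σ x) = Nm x • one)
    -- nondegeneracy of the form `(x,y) ↦ Re(x·σ(y))`
    (hnondeg : ∀ x : A, (∀ y : A, Re (mul x (σ y)) = 0) → x = 0)
    (Q₁ Q₂ Q₃ : Fin 2 → A) (k : Fin 2) :
    mul (Q₁ k) (pairA mul σ Q₂ Q₃) + mul (Q₂ k) (pairA mul σ Q₁ Q₃)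
      = act mul (tilde (Gamma mul σ Q₁ Q₂)) Q₃ k :=
  matter_three_psi_general mul σ hmul_addl hmul_addr hassoc Q₁ Q₂ Q₃ k

end Stmt6
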